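/- Let r be continuous and strictly positive on [0,H], let α, β, P*, Z* > 0 with αZ* > βP*·max r, and define k₂(λ) = (1/H)∫₀^H r(h)² / ( (λ + r(h)(1 − (P*β/(Z*α)) r(h))) · (αZ* − βP* r(h)) ) dh. Assume the steady-state relation P* = (1/H)∫₀^H r(h)/(αZ*/P* − β r(h)) dh holds. Then k₂(0) > 1, k₂ is strictly decreasing in λ on (0,∞), and k₂(λ) → 0 as λ → +∞; hence there exists a unique λ > 0 with k₂(λ) = 1. -/

import Mathlib

/-!
With `d = αZ - βP r` and `c = Pβ/(Zα)`, the integrand of `k₂` is `w / (λ + g)` with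
`w = r² / d > 0` and `g = r (1 - c r) > 0` on `[0, H]`. Hence `k₂` is continuous and strictly
decreasing on `[0, ∞)` and bounded by `(1/H) (∫ w) / λ`. At `λ = 0` the integrand equals
`(r / d) / (1 - c r) > r / d`, while the steady-state relation says precisely that `r / d` has
mean `1`; so `k₂ 0 > 1`, and the intermediate value theorem gives the unique root.
-/

open Set Filter intervalIntegral

section IntegralDivAdd

variable {a b : ℝ} {w g : ℝ → ℝ}

theorem continuousOn_div_add_of_nonneg (hw : ContinuousOn w (Icc a b))
    (hg : ContinuousOn g (Icc a b)) (hg0 : ∀ h ∈ Icc a b, 0 < g h) {lam : ℝ}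
    (hlam : 0 ≤ lam) :
    ContinuousOn (fun h => w h / (lam + g h)) (Icc a b) :=
  hw.div (continuousOn_const.add hg) fun h hh => (add_pos_of_nonneg_of_pos hlam (hg0 h hh)).ne'

theorem strictAntiOn_integral_div_add (hab : a < b) (hw : ContinuousOn w (Icc a b))
    (hg : ContinuousOn g (Icc a b)) (hw0 : ∀ h ∈ Icc a b, 0 < w h)
    (hg0 : ∀ h ∈ Icc a b, 0 < g h) :
    StrictAntiOn (fun lam => ∫ h in a..b, w h / (lam + g h)) (Ici 0) := by
  intro lam hlam mu hmu hlt
  have hpt : ∀ h ∈ Icc a b, w h / (mu + g h) < w h / (lam + g h) := fun h hh =>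
    div_lt_div_of_pos_left (hw0 h hh) (add_pos_of_nonneg_of_pos hlam (hg0 h hh))
      (by linarith)
  exact integral_lt_integral_of_continuousOn_of_le_of_exists_lt hab
    (continuousOn_div_add_of_nonneg hw hg hg0 hmu)
    (continuousOn_div_add_of_nonneg hw hg hg0 hlam)
    (fun h hh => (hpt h (Ioc_subset_Icc_self hh)).le)
    ⟨a, left_mem_Icc.2 hab.le, hpt a (left_mem_Icc.2 hab.le)⟩

theorem tendsto_integral_div_add_atTop (hab : a ≤ b) (hw : ContinuousOn w (Icc a b))
    (hg : ContinuousOn g (Icc a b)) (hw0 : ∀ h ∈ Icc a b, 0 < w h)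
    (hg0 : ∀ h ∈ Icc a b, 0 < g h) :
    Tendsto (fun lam => ∫ h in a..b, w h / (lam + g h)) atTop (nhds 0) := by
  have hlim : Tendsto (fun lam => (∫ h in a..b, w h) / lam) atTop (nhds 0) :=
    tendsto_const_nhds.div_atTop tendsto_id
  refine tendsto_of_tendsto_of_tendsto_of_le_of_le' tendsto_const_nhds hlim ?_ ?_
  · filter_upwards [eventually_ge_atTop 0] with lam hlam
    exact integral_nonneg hab fun h hh =>
      (div_pos (hw0 h hh) (add_pos_of_nonneg_of_pos hlam (hg0 h hh))).le
  · filter_upwards [eventually_gt_atTop 0] with lam hlam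
    rw [← integral_div]
    refine integral_mono_on hab
      ((continuousOn_div_add_of_nonneg hw hg hg0 hlam.le).intervalIntegrable_of_Icc hab)
      ((hw.div_const lam).intervalIntegrable_of_Icc hab) fun h hh => ?_
    exact div_le_div_of_nonneg_left (hw0 h hh).le hlam (le_add_of_nonneg_right (hg0 h hh).le)

theorem continuousOn_integral_div_add (hab : a ≤ b) (hw : ContinuousOn w (Icc a b))
    (hg : ContinuousOn g (Icc a b)) (hg0 : ∀ h ∈ Icc a b, 0 < g h) :
    ContinuousOn (fun lam => ∫ h in a..b, w h / (lam + g h)) (Ici 0) := by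
  set w' := IccExtend hab ((Icc a b).domRestrict w)
  set g' := IccExtend hab ((Icc a b).domRestrict g)
  have hg'0 : ∀ h, 0 < g' h := fun h => hg0 _ (projIcc a b hab h).2
  have hcont : Continuous fun lam : Ici (0 : ℝ) => ∫ h in a..b, w' h / (lam + g' h) := by
    refine continuous_parametric_intervalIntegral_of_continuous' ?_ a b
    have hw' : Continuous w' := hw.domRestrict.Icc_extend'
    have hg' : Continuous g' := hg.domRestrict.Icc_extend'
    exact (hw'.comp continuous_snd).div
      ((continuous_subtype_val.comp continuous_fst).add (hg'.comp continuous_snd))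
      fun p => (add_pos_of_nonneg_of_pos p.1.2 (hg'0 p.2)).ne'
  rw [continuousOn_iff_continuous_domRestrict]
  convert hcont using 2 with lam
  refine integral_congr fun h hh => ?_
  rw [uIcc_of_le hab] at hh
  simp only [w', g', IccExtend_of_mem hab _ hh, domRestrict_apply]

end IntegralDivAdd

theorem existsUnique_pos_eq_of_strictAntiOn {f : ℝ → ℝ} {c L : ℝ}
    (hf : ContinuousOn f (Ici 0)) (hanti : StrictAntiOn f (Ici 0)) (h0 : c < f 0)
    (hlim : Tendsto f atTop (nhds L)) (hL : L < c) :
    ∃! x, 0 < x ∧ f x = c := by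
  obtain ⟨A, hA, hA0⟩ := ((hlim.eventually_lt_const hL).and (eventually_ge_atTop 0)).exists
  obtain ⟨x, hx, hfx⟩ :=
    intermediate_value_Icc' hA0 (hf.mono Icc_subset_Ici_self) ⟨hA.le, h0.le⟩
  have hx0 : 0 < x := hx.1.lt_of_ne <| by rintro rfl; exact h0.ne' hfx
  refine ⟨x, ⟨hx0, hfx⟩, fun y ⟨hy, hfy⟩ => ?_⟩
  exact hanti.injOn (mem_Ici.2 hy.le) (mem_Ici.2 hx0.le) (hfy.trans hfx.symm)

theorem mean_lt_mean_of_continuousOn {H : ℝ} {f g : ℝ → ℝ} (hH : 0 < H)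
    (hf : ContinuousOn f (Icc 0 H)) (hg : ContinuousOn g (Icc 0 H))
    (hlt : ∀ h ∈ Icc 0 H, f h < g h) :
    (1 / H) * ∫ h in (0:ℝ)..H, f h < (1 / H) * ∫ h in (0:ℝ)..H, g h :=
  mul_lt_mul_of_pos_left (integral_lt_integral_of_continuousOn_of_le_of_exists_lt hH hf hg
    (fun h hh => (hlt h (Ioc_subset_Icc_self hh)).le)
    ⟨0, left_mem_Icc.2 hH.le, hlt 0 (left_mem_Icc.2 hH.le)⟩) (one_div_pos.2 hH)

theorem div_lt_sq_div_div_mul_one_sub {x D t : ℝ} (hx : 0 < x) (hD : 0 < D) (ht : t ∈ Ioo 0 1) :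
    x / D < x ^ 2 / D / (x * (1 - t)) := by
  have h1t : 0 < 1 - t := sub_pos.2 ht.2
  calc x / D < x / D / (1 - t) :=
        (lt_div_iff₀ h1t).2 (mul_lt_of_lt_one_right (div_pos hx hD) (by linarith [ht.1]))
    _ = x ^ 2 / D / (x * (1 - t)) := by field_simp

section SteadyState

variable {α β P Z : ℝ}

theorem div_mul_mem_Ioo_of_sub_pos (hα : 0 < α) (hβ : 0 < β) (hP : 0 < P) (hZ : 0 < Z) {x : ℝ}
    (hx : 0 < x) (hd : 0 < α * Z - β * P * x) :
    P * β / (Z * α) * x ∈ Ioo 0 1 := by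
  have hrw : P * β / (Z * α) * x = 1 - (α * Z - β * P * x) / (α * Z) := by field_simp; ring
  exact ⟨by positivity, by rw [hrw]; linarith [div_pos hd (mul_pos hα hZ)]⟩

theorem mean_eq_one_of_steadyState {H : ℝ} {r : ℝ → ℝ} (hP : P ≠ 0)
    (hss : P = (1 / H) * ∫ h in (0:ℝ)..H, r h / (α * Z / P - β * r h)) :
    (1 / H) * ∫ h in (0:ℝ)..H, r h / (α * Z - β * P * r h) = 1 := by
  have hP_mul : ∀ h, r h / (α * Z / P - β * r h) = P * (r h / (α * Z - β * P * r h)) :=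
    fun h => by
      rw [show α * Z / P - β * r h = (α * Z - β * P * r h) / P by field_simp,
        div_div_eq_mul_div, mul_comm, mul_div_assoc]
  simp only [hP_mul, integral_const_mul] at hss
  exact mul_left_cancel₀ hP (by linarith)

end SteadyState

theorem stmt4_general
    (H α β P Z rM : ℝ) (r : ℝ → ℝ) (k₂ : ℝ → ℝ)
    (hH : 0 < H) (hα : 0 < α) (hβ : 0 < β) (hP : 0 < P) (hZ : 0 < Z)
    (hr_cont : ContinuousOn r (Icc 0 H))
    (hr_pos : ∀ h ∈ Icc (0:ℝ) H, 0 < r h)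
    (hrM_ub : ∀ h ∈ Icc (0:ℝ) H, r h ≤ rM)
    (hcond : α * Z > β * P * rM)
    (hk₂ : ∀ lam, k₂ lam = (1 / H) * ∫ h in (0:ℝ)..H,
      (r h) ^ 2 / ((lam + r h * (1 - (P * β / (Z * α)) * r h)) * (α * Z - β * P * r h)))
    (hss : P = (1 / H) * ∫ h in (0:ℝ)..H, r h / (α * Z / P - β * r h)) :
    k₂ 0 > 1 ∧
    StrictAntiOn k₂ (Ioi 0) ∧
    Tendsto k₂ atTop (nhds 0) ∧
    ∃! lam : ℝ, 0 < lam ∧ k₂ lam = 1 := by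
  set d := fun h => α * Z - β * P * r h
  set w := fun h => r h ^ 2 / d h
  set g := fun h => r h * (1 - P * β / (Z * α) * r h)
  have hk : k₂ = fun lam => (1 / H) * ∫ h in (0:ℝ)..H, w h / (lam + g h) := by
    ext lam; simp only [hk₂, w, g, d, div_mul_eq_div_div_swap]
  have hd : ∀ h ∈ Icc 0 H, 0 < d h := fun h hh => by nlinarith [hrM_ub h hh, mul_pos hβ hP]
  have hcr h (hh : h ∈ Icc 0 H) :=
    div_mul_mem_Ioo_of_sub_pos hα hβ hP hZ (hr_pos h hh) (hd h hh)
  have hdc : ContinuousOn d (Icc 0 H) := by fun_prop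
  have hwc : ContinuousOn w (Icc 0 H) := (hr_cont.pow 2).div hdc fun h hh => (hd h hh).ne'
  have hgc : ContinuousOn g (Icc 0 H) := by fun_prop
  have hw0 : ∀ h ∈ Icc 0 H, 0 < w h := fun h hh => div_pos (pow_pos (hr_pos h hh) 2) (hd h hh)
  have hg0 : ∀ h ∈ Icc 0 H, 0 < g h := fun h hh =>
    mul_pos (hr_pos h hh) (sub_pos.2 (hcr h hh).2)
  have hk0 : 1 < k₂ 0 := (mean_eq_one_of_steadyState hP.ne' hss).symm.trans_lt <| by
    rw [hk]
    refine mean_lt_mean_of_continuousOn hH (hr_cont.div hdc fun h hh => (hd h hh).ne')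
      (continuousOn_div_add_of_nonneg hwc hgc hg0 le_rfl) fun h hh => ?_
    rw [zero_add]
    exact div_lt_sq_div_div_mul_one_sub (hr_pos h hh) (hd h hh) (hcr h hh)
  have hanti : StrictAntiOn k₂ (Ici 0) := hk ▸ fun x hx y hy hxy => mul_lt_mul_of_pos_left
    (strictAntiOn_integral_div_add hH hwc hgc hw0 hg0 hx hy hxy) (one_div_pos.2 hH)
  have hlim : Tendsto k₂ atTop (nhds 0) := by
    simpa only [hk, mul_zero] using
      (tendsto_integral_div_add_atTop hH.le hwc hgc hw0 hg0).const_mul (1 / H)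
  have hcont : ContinuousOn k₂ (Ici 0) :=
    hk ▸ continuousOn_const.mul (continuousOn_integral_div_add hH.le hwc hgc hg0)
  exact ⟨hk0, hanti.mono Ioi_subset_Ici_self, hlim,
    existsUnique_pos_eq_of_strictAntiOn hcont hanti hk0 hlim one_pos⟩

theorem stmt4
    (H α β k P Z rM : ℝ) (r : ℝ → ℝ) (k₂ : ℝ → ℝ)
    (hH : 0 < H) (hα : 0 < α) (hβ : 0 < β) (hP : 0 < P) (hZ : 0 < Z)
    (hr_cont : ContinuousOn r (Icc 0 H))
    (hr_pos : ∀ h ∈ Icc (0:ℝ) H, 0 < r h)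
    (hrM_ub : ∀ h ∈ Icc (0:ℝ) H, r h ≤ rM)
    (hrM_mem : ∃ h ∈ Icc (0:ℝ) H, r h = rM)
    (hcond : α * Z > β * P * rM)
    (hk₂ : ∀ lam, k₂ lam = (1 / H) * ∫ h in (0:ℝ)..H,
      (r h) ^ 2 / ((lam + r h * (1 - (P * β / (Z * α)) * r h)) * (α * Z - β * P * r h)))
    (hss : P = (1 / H) * ∫ h in (0:ℝ)..H, r h / (α * Z / P - β * r h)) :
    k₂ 0 > 1 ∧
    StrictAntiOn k₂ (Ioi 0) ∧
    Tendsto k₂ atTop (nhds 0) ∧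
    ∃! lam : ℝ, 0 < lam ∧ k₂ lam = 1 :=
  stmt4_general H α β P Z rM r k₂ hH hα hβ hP hZ hr_cont hr_pos hrM_ub hcond hk₂ hss
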